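/- If a splitting cycle in a triangulation of genus 1 + s(12s+7) by K_{12s+7} has type equal to half the genus (splitting into two equal-genus pieces, genus even), then its length k satisfies k ≥ (5 + sqrt((1 + (24s+7)²)/2))/2. -/
import Mathlib


/-- A splitting cycle of type half the genus in the triangulation of genus
`g = 1 + s(12s+7)` by `K_{12s+7}` (bounding on one side a subsurface with no
interior vertices, with `e` edges and `f` triangular faces, so `3f = 2e - k`
and `k - e + f = 1 - 2g'` with `g' = g/2`), whose length `k` satisfies the
simple-graph bound `2e ≤ k(k-1)`, has
`k ≥ (5 + √((1 + (24s+7)²)/2))/2`. -/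
theorem half_genus_splitting_cycle_length (s k e f g g' : ℕ)
    (hg : g = 1 + s * (12 * s + 7)) (hgeven : Even g) (hg' : g' = g / 2)
    (h1 : 3 * (f : ℤ) = 2 * e - k)
    (h2 : (k : ℤ) - e + f = 1 - 2 * g')
    (h3 : 2 * e ≤ k * (k - 1))
    : (k : ℝ) ≥ (5 + Real.sqrt ((1 + (24 * s + 7) ^ 2) / 2)) / 2 := by
  have hg2 : g = 2 * g' := by
    obtain ⟨r, hr⟩ := hgeven
    omega
  have he : (e : ℤ) = 2 * k + 6 * g' - 3 := by linarith
  have hk1 : 1 ≤ k := by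
    rcases Nat.eq_zero_or_pos k with hk | hk
    · exfalso
      subst hk
      have he0 : e = 0 := by omega
      rw [he0] at he
      have : (g' : ℤ) ≥ 0 := Int.ofNat_nonneg g'
      omega
    · exact hk
  have h3' : 2 * (e : ℤ) ≤ k * (k - 1) := by
    zify [hk1] at h3
    exact_mod_cast h3
  have hgZ : (g : ℤ) = 1 + s * (12 * s + 7) := by exact_mod_cast congrArg (Nat.cast : ℕ → ℤ) hg
  have hg2Z : (g : ℤ) = 2 * g' := by exact_mod_cast congrArg (Nat.cast : ℕ → ℤ) hg2
  have hkey : (25 : ℤ) + 288 * s ^ 2 + 168 * s ≤ (2 * k - 5) ^ 2 := by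
    nlinarith [h3', he, hgZ, hg2Z]
  have hk5 : (5 : ℤ) ≤ k := by
    by_contra hc
    push_neg at hc
    have hk1' : (1 : ℤ) ≤ k := by exact_mod_cast hk1
    nlinarith [hkey, sq_nonneg ((s : ℤ)), sq_nonneg ((2 * k : ℤ) - 5)]
  have hkeyR : ((1 + (24 * (s : ℝ) + 7) ^ 2) / 2) ≤ (2 * (k : ℝ) - 5) ^ 2 := by
    have : ((25 : ℝ) + 288 * s ^ 2 + 168 * s) ≤ (2 * k - 5) ^ 2 := by exact_mod_cast hkey
    nlinarith [this]
  have hk5R : (5 : ℝ) ≤ (k : ℝ) := by exact_mod_cast hk5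
  have hs : Real.sqrt ((1 + (24 * (s : ℝ) + 7) ^ 2) / 2) ≤ 2 * (k : ℝ) - 5 := by
    calc Real.sqrt ((1 + (24 * (s : ℝ) + 7) ^ 2) / 2)
        ≤ Real.sqrt ((2 * (k : ℝ) - 5) ^ 2) := Real.sqrt_le_sqrt hkeyR
      _ = 2 * (k : ℝ) - 5 := Real.sqrt_sq (by linarith)
  push_cast at hs ⊢
  linarith
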